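/- Let M be a ℤ-module, B : M × M → ℤ a ℤ-bilinear form, t₁, …, t_l ∈ M and ε₁, …, ε_l ∈ {1, −1}. For each k let τ_k : M → M be the map τ_k(x) = x + ε_k · B(t_k, x) · t_k, and let Φ = τ_l ∘ ⋯ ∘ τ₁. Let a₁, …, a_n ∈ M satisfy B(a_j, a_i) = 0 for all i, j ∈ {1, …, n}. Define c_{ij} = Σ_{m=1}^{l} Σ_{1 ≤ k₁ < ⋯ < k_m ≤ l} ε_{k₁}⋯ε_{k_m} · B(t_{k_m}, t_{k_{m−1}}) ⋯ B(t_{k₂}, t_{k₁}) · B(t_{k₁}, a_j) · B(t_{k_m}, a_i). Then B(Φ(a_j), a_i) = c_{ij} for all i, j. -/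

import Mathlib

/-!
Each twist is `1 + N_k` with `N_k x = ε_k B(t_k, x) t_k` additive, so the ordered composite
`(1 + N_l) ∘ ⋯ ∘ (1 + N_1)` expands into the sum, over all strictly increasing index sequences
`k₁ < ⋯ < k_m`, of `N_{k_m} ∘ ⋯ ∘ N_{k_1}`; such a composite sends `x` to
`ε_{k₁}⋯ε_{k_m} B(t_{k_m}, t_{k_{m-1}})⋯B(t_{k₂}, t_{k₁}) B(t_{k₁}, x) t_{k_m}`.
Pairing with `a_i`, the empty sequence contributes `B(a_j, a_i) = 0`.
-/

open Finset

def strictMonoMaps (m l : ℕ) : Finset (Fin m → Fin l) := univ.filter StrictMono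

@[simp]
theorem mem_strictMonoMaps {m l : ℕ} {k : Fin m → Fin l} :
    k ∈ strictMonoMaps m l ↔ StrictMono k := by
  simp [strictMonoMaps]

theorem strictMonoMaps_eq_empty {m l : ℕ} (h : l < m) : strictMonoMaps m l = ∅ := by
  refine eq_empty_of_forall_notMem fun k hk => ?_
  have := Fintype.card_le_of_injective k (mem_strictMonoMaps.mp hk).injective
  simp only [Fintype.card_fin] at this
  omega

theorem sum_strictMonoMaps_zero {β : Type*} [AddCommMonoid β] (l : ℕ)
    (g : (Fin 0 → Fin l) → β) :
    ∑ k ∈ strictMonoMaps 0 l, g k = g Fin.elim0 := by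
  rw [strictMonoMaps, filter_true_of_mem fun k _ a => a.elim0, univ_unique, sum_singleton]
  exact congrArg g (Subsingleton.elim _ _)

theorem strictMono_castSucc_comp_iff {m l : ℕ} {k : Fin m → Fin l} :
    StrictMono (Fin.castSucc ∘ k) ↔ StrictMono k :=
  ⟨fun h _ _ hab => Fin.castSucc_lt_castSucc_iff.mp (h hab), Fin.strictMono_castSucc.comp⟩

theorem strictMono_snoc_last_iff {m l : ℕ} {k : Fin m → Fin l} :
    StrictMono (Fin.snoc (Fin.castSucc ∘ k) (Fin.last l) : Fin (m + 1) → Fin (l + 1)) ↔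
      StrictMono k := by
  refine ⟨fun h => ?_, fun h a b hab => ?_⟩
  · rw [← strictMono_castSucc_comp_iff]
    simpa [Function.comp_def] using h.comp Fin.strictMono_castSucc
  · induction b using Fin.lastCases with
    | last =>
      induction a using Fin.lastCases with
      | last => exact absurd hab (lt_irrefl _)
      | cast a => simp
    | cast b =>
      induction a using Fin.lastCases with
      | last => exact absurd hab (Fin.le_last _).not_gt
      | cast a => simpa using h (Fin.castSucc_lt_castSucc_iff.mp hab)

theorem sum_strictMonoMaps_filter_ne_last {β : Type*} [AddCommMonoid β] (m l : ℕ)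
    (g : (Fin (m + 1) → Fin (l + 1)) → β) :
    ∑ k ∈ strictMonoMaps (m + 1) (l + 1) with k (Fin.last m) ≠ Fin.last l, g k =
      ∑ k ∈ strictMonoMaps (m + 1) l, g (Fin.castSucc ∘ k) := by
  refine (sum_bij' (fun k _ => Fin.castSucc ∘ k) (fun k hk a => (k a).castPred ?_)
    ?_ ?_ ?_ ?_ fun _ _ => rfl).symm
  · simp only [mem_filter, mem_strictMonoMaps] at hk
    exact ((hk.1.monotone (Fin.le_last a)).trans_lt (Fin.lt_last_iff_ne_last.mpr hk.2)).ne
  · intro k hk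
    simp only [mem_filter, mem_strictMonoMaps] at hk ⊢
    exact ⟨strictMono_castSucc_comp_iff.mpr hk, (Fin.castSucc_lt_last _).ne⟩
  · intro k hk
    simp only [mem_filter, mem_strictMonoMaps] at hk ⊢
    exact fun a b hab => Fin.castPred_lt_castPred_iff.mpr (hk.1 hab)
  · intro k hk; ext; simp
  · intro k hk; ext; simp

theorem sum_strictMonoMaps_filter_eq_last {β : Type*} [AddCommMonoid β] (m l : ℕ)
    (g : (Fin (m + 1) → Fin (l + 1)) → β) :
    ∑ k ∈ strictMonoMaps (m + 1) (l + 1) with k (Fin.last m) = Fin.last l, g k =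
      ∑ k ∈ strictMonoMaps m l, g (Fin.snoc (Fin.castSucc ∘ k) (Fin.last l)) := by
  refine (sum_bij' (fun k _ => Fin.snoc (Fin.castSucc ∘ k) (Fin.last l))
    (fun k hk a => (k a.castSucc).castPred
      (((mem_strictMonoMaps.mp (mem_filter.mp hk).1 (Fin.castSucc_lt_last a)).trans_le
        (Fin.le_last _)).ne)) ?_ ?_ ?_ ?_ fun _ _ => rfl).symm
  · intro k hk
    simp only [mem_filter, mem_strictMonoMaps] at hk ⊢
    exact ⟨strictMono_snoc_last_iff.mpr hk, Fin.snoc_last _ _⟩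
  · intro k hk
    simp only [mem_filter, mem_strictMonoMaps] at hk ⊢
    exact fun a b hab =>
      Fin.castPred_lt_castPred_iff.mpr (hk.1 (Fin.castSucc_lt_castSucc_iff.mpr hab))
  · intro k hk; ext; simp
  · intro k hk
    simp only [mem_filter, mem_strictMonoMaps] at hk
    conv_rhs => rw [← Fin.snoc_init_self k, hk.2]
    congr 1

theorem sum_strictMonoMaps_succ {β : Type*} [AddCommMonoid β] (m l : ℕ)
    (g : (Fin (m + 1) → Fin (l + 1)) → β) :
    ∑ k ∈ strictMonoMaps (m + 1) (l + 1), g k =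
      ∑ k ∈ strictMonoMaps (m + 1) l, g (Fin.castSucc ∘ k) +
        ∑ k ∈ strictMonoMaps m l, g (Fin.snoc (Fin.castSucc ∘ k) (Fin.last l)) := by
  rw [← sum_filter_not_add_sum_filter _ (fun k => k (Fin.last m) = Fin.last l),
    sum_strictMonoMaps_filter_ne_last, sum_strictMonoMaps_filter_eq_last]

theorem sum_range_sum_strictMonoMaps {β : Type*} [AddCommMonoid β] (l : ℕ)
    (g : ∀ m, (Fin m → Fin l) → β) :
    ∑ m ∈ range (l + 1), ∑ k ∈ strictMonoMaps m l, g m k =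
      ∑ m ∈ range (l + 1), ∑ k ∈ strictMonoMaps (m + 1) l, g (m + 1) k + g 0 Fin.elim0 := by
  rw [sum_range_succ', sum_strictMonoMaps_zero, sum_range_succ _ l,
    strictMonoMaps_eq_empty l.lt_succ_self, sum_empty, add_zero]

theorem foldl_ofFn_add_self_eq_sum {M : Type*} [AddCommMonoid M] :
    ∀ {l : ℕ} (N : Fin l → M →+ M) (x : M),
      (List.ofFn fun i (y : M) => y + N i y).foldl (fun y f => f y) x =
        ∑ m ∈ range (l + 1), ∑ k ∈ strictMonoMaps m l,
          (List.ofFn fun j => ⇑(N (k j))).foldl (fun y f => f y) x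
  | 0, N, x => by rw [sum_range_one, sum_strictMonoMaps_zero]; rfl
  | l + 1, N, x => by
    have hsnoc : ∀ m (k : Fin m → Fin l),
        (List.ofFn fun j => ⇑(N (Fin.snoc (α := fun _ => Fin (l + 1)) (Fin.castSucc ∘ k)
          (Fin.last l) j))).foldl (fun y f => f y) x =
        N (Fin.last l) ((List.ofFn fun j => ⇑(N (k j).castSucc)).foldl (fun y f => f y) x) := by
      intro m k
      simp only [List.ofFn_succ_last, List.foldl_concat, Fin.snoc_castSucc, Fin.snoc_last,
        Function.comp_apply]
    rw [List.ofFn_succ_last, List.foldl_concat, foldl_ofFn_add_self_eq_sum]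
    beta_reduce
    rw [map_sum, sum_range_succ' _ (l + 1), sum_range_sum_strictMonoMaps, sum_strictMonoMaps_zero]
    simp only [sum_strictMonoMaps_succ, sum_add_distrib, hsnoc, map_sum, List.ofFn_zero,
      List.foldl_nil, Function.comp_apply]
    abel

section Twist

variable {R M : Type*} [CommSemiring R] [AddCommMonoid M] [Module R M]
  (B : M →ₗ[R] M →ₗ[R] R) {l : ℕ} (t : Fin l → M) (ε : Fin l → R)

def chainCoeff {m : ℕ} (k : Fin (m + 1) → Fin l) : R :=
  (∏ j, ε (k j)) * ∏ i : Fin m, B (t (k i.succ)) (t (k i.castSucc))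

theorem chainCoeff_succ {m : ℕ} (k : Fin (m + 2) → Fin l) :
    chainCoeff B t ε k =
      ε (k (Fin.last _)) * B (t (k (Fin.last _))) (t (k (Fin.last m).castSucc)) *
        chainCoeff B t ε (Fin.init k) := by
  simp only [chainCoeff, Fin.prod_univ_castSucc, Fin.init, Fin.succ_castSucc, Fin.succ_last]
  ring

theorem foldl_ofFn_smulRight :
    ∀ {m : ℕ} (k : Fin (m + 1) → Fin l) (x : M),
      (List.ofFn fun j => ⇑((ε (k j) • B (t (k j))).smulRight (t (k j)))).foldl
          (fun y f => f y) x =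
        (chainCoeff B t ε k * B (t (k 0)) x) • t (k (Fin.last m))
  | 0, k, x => by simp [chainCoeff]
  | m + 1, k, x => by
    have ih := foldl_ofFn_smulRight (Fin.init k) x
    simp only [Fin.init, Fin.castSucc_zero] at ih
    rw [List.ofFn_succ_last, List.foldl_concat, ih, chainCoeff_succ]
    simp only [LinearMap.smulRight_apply, map_smul, LinearMap.smul_apply, smul_eq_mul, smul_smul]
    congr 1
    ring

end Twist

theorem intersection_matrix_of_monodromy_general
    {M : Type*} [AddCommGroup M] [Module ℤ M]
    (B : M →ₗ[ℤ] M →ₗ[ℤ] ℤ) (l : ℕ) (t : Fin l → M) (ε : Fin l → ℤ)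
    (τ : Fin l → M → M)
    (hτ : ∀ k x, τ k x = x + (ε k * B (t k) x) • t k)
    (n : ℕ) (a : Fin n → M)
    (ha : ∀ i j, B (a j) (a i) = 0)
    (c : Fin n → Fin n → ℤ)
    (hc : ∀ i j, c i j =
      ∑ m ∈ Finset.range l,
        ∑ k ∈ Finset.univ.filter (fun k : Fin (m + 1) → Fin l => StrictMono k),
          (∏ j', ε (k j')) *
            (∏ i' : Fin m, B (t (k i'.succ)) (t (k i'.castSucc))) *
            B (t (k 0)) (a j) * B (t (k (Fin.last m))) (a i)) :
    ∀ i j, B ((List.ofFn τ).foldl (fun x f => f x) (a j)) (a i) = c i j := by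
  intro i j
  -- the `•` in `hτ` is `zsmul`, so `Module ℤ M` is replaced by the canonical instance
  obtain rfl : ‹Module ℤ M› = AddCommGroup.toIntModule M := Subsingleton.elim _ _
  have hτN : τ = fun q y => y + ((ε q • B (t q)).smulRight (t q)).toAddMonoidHom y := by
    funext q y
    simp [hτ]
  rw [hτN, foldl_ofFn_add_self_eq_sum, map_sum, LinearMap.sum_apply, sum_range_succ',
    sum_strictMonoMaps_zero, hc]
  simp only [List.ofFn_zero, List.foldl_nil, ha, add_zero, LinearMap.toAddMonoidHom_coe,
    foldl_ofFn_smulRight, map_sum, LinearMap.sum_apply, map_smul, LinearMap.smul_apply,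
    smul_eq_mul]
  rfl

/-- With `τ_k (x) = x + ε_k ⬝ B(t_k, x) ⬝ t_k`, `Φ = τ_l ∘ ⋯ ∘ τ₁`,
and elements `a₁, …, a_n` with `B(a_j, a_i) = 0` for all `i, j`, the matrix
entries
`c_{ij} = Σ_{m=1}^{l} Σ_{1 ≤ k₁ < ⋯ < k_m ≤ l} ε_{k₁}⋯ε_{k_m}
  B(t_{k_m}, t_{k_{m-1}}) ⋯ B(t_{k₂}, t_{k₁}) B(t_{k₁}, a_j) B(t_{k_m}, a_i)`
satisfy `B(Φ(a_j), a_i) = c_{ij}` for all `i, j`.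
Strictly increasing tuples `1 ≤ k₁ < ⋯ < k_m ≤ l` of length `m = m' + 1`
(with `m' ∈ {0, …, l-1}`) are encoded as strictly monotone maps
`k : Fin (m' + 1) → Fin l`. -/
theorem intersection_matrix_of_monodromy
    {M : Type*} [AddCommGroup M] [Module ℤ M]
    (B : M →ₗ[ℤ] M →ₗ[ℤ] ℤ) (l : ℕ) (t : Fin l → M) (ε : Fin l → ℤ)
    (hε : ∀ k, ε k = 1 ∨ ε k = -1)
    (τ : Fin l → M → M)
    (hτ : ∀ k x, τ k x = x + (ε k * B (t k) x) • t k)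
    (n : ℕ) (a : Fin n → M)
    (ha : ∀ i j, B (a j) (a i) = 0)
    (c : Fin n → Fin n → ℤ)
    (hc : ∀ i j, c i j =
      ∑ m ∈ Finset.range l,
        ∑ k ∈ Finset.univ.filter (fun k : Fin (m + 1) → Fin l => StrictMono k),
          (∏ j', ε (k j')) *
            (∏ i' : Fin m, B (t (k i'.succ)) (t (k i'.castSucc))) *
            B (t (k 0)) (a j) * B (t (k (Fin.last m))) (a i)) :
    ∀ i j, B ((List.ofFn τ).foldl (fun x f => f x) (a j)) (a i) = c i j :=
  intersection_matrix_of_monodromy_general B l t ε τ hτ n a ha c hc
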